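/- Let n ≥ 2 and C ∈ ℂ^{n×n} with singular value decomposition C = U S V*, where U, V are unitary and S = diag(s₁, …, s_{n−1}, 0) with s_i > 0 for all i = 1, …, n−1. Let x be the last column of V and y the last column of U (so Cx = 0 and C*y = 0, ‖x‖₂ = ‖y‖₂ = 1), and assume y* x ≠ 0. Set w = x/(y* x), Ξ = diag(s₁^{−1}, …, s_{n−1}^{−1}, 0), and G = (I − w y*) V Ξ U* (I − w y*). Then G is the group inverse of C, i.e. CG = GC, GCG = G, and CGC = C. Moreover ‖G‖₂ ≤ ϱ² / min_{1≤i≤n−1} s_i, where ϱ = 1/|y* x|. -/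

import Mathlib

set_option maxHeartbeats 2000000

open Matrix
open scoped Matrix.Norms.L2Operator InnerProductSpace ComplexConjugate

namespace GroupInvAux

variable {n : ℕ}

lemma vvM (a b : Fin n → ℂ) (M : Matrix (Fin n) (Fin n) ℂ) :
    vecMulVec a b * M = vecMulVec a (b ᵥ* M) := by
  ext i j
  simp [Matrix.mul_apply, vecMulVec_apply, Matrix.vecMul, dotProduct,
    Finset.mul_sum, mul_assoc]

lemma Mvv (M : Matrix (Fin n) (Fin n) ℂ) (a b : Fin n → ℂ) :
    M * vecMulVec a b = vecMulVec (M *ᵥ a) b := by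
  ext i j
  simp [Matrix.mul_apply, vecMulVec_apply, Matrix.mulVec, dotProduct,
    Finset.sum_mul, mul_assoc]

lemma vvvv (a b c d : Fin n → ℂ) :
    vecMulVec a b * vecMulVec c d = (b ⬝ᵥ c) • vecMulVec a d := by
  ext i j
  simp [Matrix.mul_apply, vecMulVec_apply, dotProduct, Finset.sum_mul, Finset.mul_sum]
  ring_nf
  congr 1; funext k; ring

lemma smul_vv (c : ℂ) (a b : Fin n → ℂ) :
    vecMulVec (c • a) b = c • vecMulVec a b := by
  ext i j
  simp [vecMulVec_apply, mul_assoc]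

lemma vv_mulVec (a b v : Fin n → ℂ) :
    vecMulVec a b *ᵥ v = (b ⬝ᵥ v) • a := by
  funext i
  simp [Matrix.mulVec, vecMulVec_apply, dotProduct, Finset.sum_mul, Finset.mul_sum]
  congr 1; funext k; ring

lemma pyth {E : Type*} [NormedAddCommGroup E] [InnerProductSpace ℂ E]
    (a b : E) (h : (inner ℂ a b : ℂ) = 0) : ‖a + b‖ ^ 2 = ‖a‖ ^ 2 + ‖b‖ ^ 2 := by
  have := norm_add_sq_eq_norm_sq_add_norm_sq_of_inner_eq_zero (𝕜 := ℂ) a b h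
  simpa [pow_two] using this

lemma proj_bound {E : Type*} [NormedAddCommGroup E] [InnerProductSpace ℂ E]
    (x y : E) (hx : ‖x‖ = 1) (hy : ‖y‖ = 1) (α : ℂ) (hα : (inner ℂ y x : ℂ) = α)
    (hα0 : α ≠ 0) (z : E) :
    ‖z - (α⁻¹ * (inner ℂ y z : ℂ)) • x‖ ≤ (‖α‖)⁻¹ * ‖z‖ := by
  set c : ℂ := inner ℂ x z with hc
  set p : E := z - c • x with hp
  have hxx : (inner ℂ x x : ℂ) = 1 := by
    rw [inner_self_eq_norm_sq_to_K, hx]; norm_num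
  have hxp : (inner ℂ x p : ℂ) = 0 := by
    simp [hp, inner_sub_right, inner_smul_right, hxx, hc, hx]
  have hpx : (inner ℂ p x : ℂ) = 0 := by
    rw [← inner_conj_symm, hxp, map_zero]
  have hz : z = p + c • x := by rw [hp]; abel
  have hnz : ‖z‖ ^ 2 = ‖p‖ ^ 2 + ‖c • x‖ ^ 2 := by
    rw [hz]
    exact pyth _ _ (by rw [inner_smul_right, hpx, mul_zero])
  have hres : z - (α⁻¹ * (inner ℂ y z : ℂ)) • x = p - (α⁻¹ * (inner ℂ y p : ℂ)) • x := by
    have hyz : (inner ℂ y z : ℂ) = inner ℂ y p + c * α := by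
      rw [hz, inner_add_right, inner_smul_right, hα]
    rw [hyz]
    rw [hz]
    rw [mul_add, add_smul]
    have : α⁻¹ * (c * α) = c := by field_simp
    rw [this]
    abel
  have hnres : ‖z - (α⁻¹ * (inner ℂ y z : ℂ)) • x‖ ^ 2
      = ‖p‖ ^ 2 + ‖(α⁻¹ * (inner ℂ y p : ℂ)) • x‖ ^ 2 := by
    rw [hres, sub_eq_add_neg]
    rw [pyth _ _ (by rw [inner_neg_right, inner_smul_right, hpx, mul_zero, neg_zero])]
    rw [norm_neg]
  set β : ℂ := inner ℂ x y with hβ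
  have hβα : ‖β‖ = ‖α‖ := by
    rw [hβ, ← hα, ← inner_conj_symm y x]
    exact (Complex.norm_conj _).symm
  set q : E := y - β • x with hq
  have hyq : (inner ℂ y p : ℂ) = inner ℂ q p := by
    rw [hq, inner_sub_left, inner_smul_left, hxp, mul_zero, sub_zero]
  have hnq : ‖q‖ ^ 2 = 1 - ‖α‖ ^ 2 := by
    have hy2 : ‖y‖ ^ 2 = ‖q‖ ^ 2 + ‖β • x‖ ^ 2 := by
      have : y = q + β • x := by rw [hq]; abel
      rw [this]
      refine pyth _ _ ?_
      rw [inner_smul_right]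
      have : (inner ℂ q x : ℂ) = 0 := by
        rw [← inner_conj_symm, hq, inner_sub_right, inner_smul_right, hxx, mul_one,
          hβ, sub_self, map_zero]
      rw [this, mul_zero]
    rw [hy] at hy2
    rw [norm_smul, hx, mul_one] at hy2
    have : ‖β‖ = ‖α‖ := by rw [hβα]
    rw [this] at hy2
    linarith
  have hqp : ‖(inner ℂ y p : ℂ)‖ ≤ Real.sqrt (1 - ‖α‖ ^ 2) * ‖p‖ := by
    rw [hyq]
    have := norm_inner_le_norm (𝕜 := ℂ) q p
    have hq' : ‖q‖ = Real.sqrt (1 - ‖α‖ ^ 2) := by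
      rw [← hnq, Real.sqrt_sq (norm_nonneg _)]
    rw [← hq']
    exact this
  have habs : 0 < ‖α‖ := by
    exact norm_pos_iff.mpr hα0
  have hkey : ‖z - (α⁻¹ * (inner ℂ y z : ℂ)) • x‖ ^ 2 ≤ ((‖α‖)⁻¹ * ‖z‖) ^ 2 := by
    rw [hnres]
    rw [norm_smul, hx, mul_one]
    have h1 : ‖(α⁻¹ * (inner ℂ y p : ℂ))‖
        ≤ (‖α‖)⁻¹ * (Real.sqrt (1 - ‖α‖ ^ 2) * ‖p‖) := by
      rw [norm_mul]
      have : ‖(α⁻¹ : ℂ)‖ = (‖α‖)⁻¹ := by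
        rw [norm_inv]
      rw [this]
      exact mul_le_mul_of_nonneg_left (by simpa using hqp) (by positivity)
    have h2 : ‖(α⁻¹ * (inner ℂ y p : ℂ))‖ ^ 2
        ≤ ((‖α‖)⁻¹)^2 * (1 - ‖α‖ ^ 2) * ‖p‖ ^ 2 := by
      have := mul_self_le_mul_self (norm_nonneg _) h1
      have hs : Real.sqrt (1 - ‖α‖ ^ 2) ^ 2 = 1 - ‖α‖ ^ 2 := by
        apply Real.sq_sqrt
        nlinarith [hnq, sq_nonneg ‖q‖]
      calc ‖(α⁻¹ * (inner ℂ y p : ℂ))‖ ^ 2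
          = ‖(α⁻¹ * (inner ℂ y p : ℂ))‖ * ‖(α⁻¹ * (inner ℂ y p : ℂ))‖ := by ring
        _ ≤ (‖α‖)⁻¹ * (Real.sqrt (1 - ‖α‖ ^ 2) * ‖p‖) *
            ((‖α‖)⁻¹ * (Real.sqrt (1 - ‖α‖ ^ 2) * ‖p‖)) := this
        _ = ((‖α‖)⁻¹)^2 * (Real.sqrt (1 - ‖α‖ ^ 2))^2 * ‖p‖^2 := by ring
        _ = ((‖α‖)⁻¹)^2 * (1 - ‖α‖ ^ 2) * ‖p‖ ^ 2 := by rw [hs]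
    have hz2 : ‖p‖ ^ 2 ≤ ‖z‖ ^ 2 := by nlinarith [hnz, sq_nonneg ‖c • x‖]
    have hinv : ((‖α‖)⁻¹)^2 * (‖α‖ ^2) = 1 := by
      field_simp
    nlinarith [h2, hz2, sq_nonneg ‖p‖, sq_nonneg ((‖α‖)⁻¹)]
  have := Real.sqrt_le_sqrt hkey
  rw [Real.sqrt_sq (norm_nonneg _), Real.sqrt_sq (by positivity)] at this
  exact this

lemma opNorm_le_of_mulVec (A : Matrix (Fin n) (Fin n) ℂ) {c : ℝ} (hc : 0 ≤ c)
    (h : ∀ v : Fin n → ℂ,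
      ‖((WithLp.equiv 2 (Fin n → ℂ)).symm (A *ᵥ v) : EuclideanSpace ℂ (Fin n))‖
        ≤ c * ‖((WithLp.equiv 2 (Fin n → ℂ)).symm v : EuclideanSpace ℂ (Fin n))‖) :
    ‖A‖ ≤ c := by
  rw [Matrix.cstar_norm_def]
  refine ContinuousLinearMap.opNorm_le_bound _ hc fun z => ?_
  have hz : z = (WithLp.equiv 2 (Fin n → ℂ)).symm (WithLp.equiv 2 (Fin n → ℂ) z) :=
    (Equiv.symm_apply_apply _ _).symm
  rw [hz, WithLp.equiv_symm_apply, toEuclideanCLM_toLp]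
  simpa [Matrix.toLin'_apply, WithLp.equiv_symm_apply] using h (WithLp.equiv 2 (Fin n → ℂ) z)

lemma diag_norm_le (d : Fin n → ℂ) {c : ℝ} (hc : 0 ≤ c)
    (hd : ∀ i, ‖d i‖ ≤ c) :
    ‖(Matrix.diagonal d : Matrix (Fin n) (Fin n) ℂ)‖ ≤ c := by
  apply opNorm_le_of_mulVec _ hc
  intro v
  rw [EuclideanSpace.norm_eq, EuclideanSpace.norm_eq]
  simp only [WithLp.equiv_symm_apply, PiLp.toLp_apply]
  have h1 : ∀ i : Fin n, ‖(Matrix.diagonal d *ᵥ v) i‖ ^ 2 ≤ c ^ 2 * ‖v i‖ ^ 2 := by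
    intro i
    rw [Matrix.mulVec_diagonal, norm_mul]
    have h2 : ‖d i‖ ≤ c := by exact hd i
    have h3 : ‖d i‖ ^ 2 ≤ c ^ 2 := by nlinarith [norm_nonneg (d i)]
    calc (‖d i‖ * ‖v i‖) ^ 2 = ‖d i‖ ^ 2 * ‖v i‖ ^ 2 := by ring
      _ ≤ c ^ 2 * ‖v i‖ ^ 2 := mul_le_mul_of_nonneg_right h3 (sq_nonneg _)
  calc Real.sqrt (∑ i, ‖(Matrix.diagonal d *ᵥ v) i‖ ^ 2)
      ≤ Real.sqrt (∑ i, c ^ 2 * ‖v i‖ ^ 2) :=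
        Real.sqrt_le_sqrt (Finset.sum_le_sum fun i _ => h1 i)
    _ = Real.sqrt (c ^ 2 * ∑ i, ‖v i‖ ^ 2) := by rw [Finset.mul_sum]
    _ = c * Real.sqrt (∑ i, ‖v i‖ ^ 2) := by
        rw [Real.sqrt_mul (sq_nonneg c), Real.sqrt_sq hc]

end GroupInvAux

/-- Spectral norm (operator 2-norm) of a complex matrix. -/
noncomputable def specNorm {n : ℕ} (M : Matrix (Fin n) (Fin n) ℂ) : ℝ :=
  ‖Matrix.toEuclideanCLM (𝕜 := ℂ) M‖

/-- Explicit formula for the group inverse of a singular matrix `C = U S V*` with a simple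
zero singular value, and the norm estimate `‖C^#‖₂ ≤ ϱ²/σ_{n−1}(C)` with `ϱ = 1/|y*x|`. -/
theorem group_inverse_formula {n : ℕ} (hn : 2 ≤ n)
    (C U V : Matrix (Fin n) (Fin n) ℂ) (s : Fin n → ℝ)
    (hU : U ∈ Matrix.unitaryGroup (Fin n) ℂ) (hV : V ∈ Matrix.unitaryGroup (Fin n) ℂ)
    (hspos : ∀ i : Fin n, (i : ℕ) < n - 1 → 0 < s i)
    (hslast : ∀ i : Fin n, (i : ℕ) = n - 1 → s i = 0)
    (hC : C = U * Matrix.diagonal (fun i => ((s i : ℝ) : ℂ)) * Vᴴ)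
    (x y : Fin n → ℂ)
    (hx : x = fun i => V i ⟨n - 1, by omega⟩)
    (hy : y = fun i => U i ⟨n - 1, by omega⟩)
    (hyx : (star y) ⬝ᵥ x ≠ 0)
    (w : Fin n → ℂ) (hw : w = ((star y) ⬝ᵥ x)⁻¹ • x)
    (Ξ : Matrix (Fin n) (Fin n) ℂ)
    (hΞ : Ξ = Matrix.diagonal (fun i : Fin n => if (i : ℕ) < n - 1 then (((s i)⁻¹ : ℝ) : ℂ) else 0))
    (G : Matrix (Fin n) (Fin n) ℂ)
    (hG : G = (1 - vecMulVec w (star y)) * V * Ξ * Uᴴ * (1 - vecMulVec w (star y))) :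
    C * G = G * C ∧ G * C * G = G ∧ C * G * C = C ∧
    specNorm G ≤ (1 / ‖(star y) ⬝ᵥ x‖) ^ 2 /
      sInf {t : ℝ | ∃ i : Fin n, (i : ℕ) < n - 1 ∧ s i = t} := by
  classical
  have hn1 : n - 1 < n := by omega
  set e : Fin n := ⟨n - 1, hn1⟩ with he
  set α : ℂ := (star y) ⬝ᵥ x with hα
  have hse : s e = 0 := hslast e rfl
  set Sd : Matrix (Fin n) (Fin n) ℂ := Matrix.diagonal (fun i => ((s i : ℝ) : ℂ)) with hSd
  set K : Matrix (Fin n) (Fin n) ℂ := vecMulVec w (star y) with hK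
  set Y : Matrix (Fin n) (Fin n) ℂ := vecMulVec y (star y) with hY
  set X : Matrix (Fin n) (Fin n) ℂ := vecMulVec x (star x) with hX
  -- unitarity
  have hUU : Uᴴ * U = 1 := by
    have := (Unitary.mem_iff.mp hU).1
    rwa [Matrix.star_eq_conjTranspose] at this
  have hUUt : U * Uᴴ = 1 := by
    have := (Unitary.mem_iff.mp hU).2
    rwa [Matrix.star_eq_conjTranspose] at this
  have hVV : Vᴴ * V = 1 := by
    have := (Unitary.mem_iff.mp hV).1
    rwa [Matrix.star_eq_conjTranspose] at this
  have hVVt : V * Vᴴ = 1 := by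
    have := (Unitary.mem_iff.mp hV).2
    rwa [Matrix.star_eq_conjTranspose] at this
  -- basic vector facts
  have hxV : x = V *ᵥ Pi.single e 1 := by
    rw [hx]; funext i; simp [Matrix.mulVec_single]
  have hyU : y = U *ᵥ Pi.single e 1 := by
    rw [hy]; funext i; simp [Matrix.mulVec_single]
  have hCx : C *ᵥ x = 0 := by
    rw [hC, hxV, Matrix.mulVec_mulVec, Matrix.mul_assoc (U * Sd) Vᴴ V, hVV, Matrix.mul_one,
      ← Matrix.mulVec_mulVec, hSd, Matrix.diagonal_mulVec_single]
    simp [hse]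
  have hCw : C *ᵥ w = 0 := by
    rw [hw, Matrix.mulVec_smul, hCx, smul_zero]
  have hyC : (star y) ᵥ* C = 0 := by
    have h1 : Cᴴ *ᵥ y = 0 := by
      rw [hC, hyU]
      simp only [Matrix.conjTranspose_mul, Matrix.conjTranspose_conjTranspose]
      rw [Matrix.mulVec_mulVec]
      simp only [Matrix.mul_assoc]
      rw [hUU, Matrix.mul_one, ← Matrix.mulVec_mulVec, hSd, Matrix.diagonal_conjTranspose,
        Matrix.diagonal_mulVec_single]
      have h0 : star ((s e : ℂ)) = 0 := by rw [hse]; simp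
      simp only [Pi.star_apply, Function.comp_apply, h0, zero_mul]
      simp
    calc (star y) ᵥ* C = (star y) ᵥ* Cᴴᴴ := by rw [Matrix.conjTranspose_conjTranspose]
      _ = star (Cᴴ *ᵥ y) := (Matrix.star_mulVec _ _).symm
      _ = 0 := by rw [h1]; simp
  have hyw : (star y) ⬝ᵥ w = 1 := by
    rw [hw, dotProduct_smul, ← hα, smul_eq_mul, inv_mul_cancel₀ hyx]
  -- vecMulVec facts
  have hCK : C * K = 0 := by
    rw [hK, GroupInvAux.Mvv, hCw]
    ext i j; simp [vecMulVec_apply]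
  have hKC : K * C = 0 := by
    rw [hK, GroupInvAux.vvM, hyC]
    ext i j; simp [vecMulVec_apply]
  have hKK : K * K = K := by
    rw [hK, GroupInvAux.vvvv, hyw, one_smul]
  have hYK : Y * K = Y := by
    rw [hY, hK, GroupInvAux.vvvv, hyw, one_smul]
  have hKX : K * X = X := by
    rw [hK, hX, GroupInvAux.vvvv, ← hα, hw, GroupInvAux.smul_vv, smul_smul,
      mul_inv_cancel₀ hyx, one_smul]
  -- diagonal factorization
  have hee : (e : ℕ) = n - 1 := rfl
  have hdd : Sd * Ξ = 1 - Matrix.diagonal (Pi.single e 1) := by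
    rw [hΞ, hSd, Matrix.diagonal_mul_diagonal]
    ext i j
    rcases eq_or_ne i j with rfl | hij
    · rw [Matrix.diagonal_apply_eq, Matrix.sub_apply, Matrix.one_apply_eq,
        Matrix.diagonal_apply_eq]
      by_cases hi : (i : ℕ) < n - 1
      · have hie : i ≠ e := by
          intro h; rw [h] at hi; omega
        rw [if_pos hi, Pi.single_apply, if_neg hie, ← Complex.ofReal_mul,
          mul_inv_cancel₀ (hspos i hi).ne']
        simp
      · have hie : i = e := by
          apply Fin.ext
          have := i.isLt
          omega
        rw [if_neg hi, mul_zero, Pi.single_apply, if_pos hie]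
        norm_num
    · rw [Matrix.diagonal_apply_ne _ hij, Matrix.sub_apply, Matrix.one_apply_ne hij,
        Matrix.diagonal_apply_ne _ hij]
      norm_num
  have hdd' : Ξ * Sd = 1 - Matrix.diagonal (Pi.single e 1) := by
    rw [hΞ, hSd, Matrix.diagonal_mul_diagonal]
    ext i j
    rcases eq_or_ne i j with rfl | hij
    · rw [Matrix.diagonal_apply_eq, Matrix.sub_apply, Matrix.one_apply_eq,
        Matrix.diagonal_apply_eq]
      by_cases hi : (i : ℕ) < n - 1
      · have hie : i ≠ e := by
          intro h; rw [h] at hi; omega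
        rw [if_pos hi, Pi.single_apply, if_neg hie, ← Complex.ofReal_mul,
          inv_mul_cancel₀ (hspos i hi).ne']
        simp
      · have hie : i = e := by
          apply Fin.ext
          have := i.isLt
          omega
        rw [if_neg hi, zero_mul, Pi.single_apply, if_pos hie]
        norm_num
    · rw [Matrix.diagonal_apply_ne _ hij, Matrix.sub_apply, Matrix.one_apply_ne hij,
        Matrix.diagonal_apply_ne _ hij]
      norm_num
  -- rank-one pieces
  have hD1 : Matrix.diagonal (Pi.single e (1 : ℂ))
      = vecMulVec (Pi.single e 1) (Pi.single e 1) := by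
    ext i j
    rw [Matrix.diagonal_apply, vecMulVec_apply, Pi.single_apply, Pi.single_apply]
    split_ifs <;> simp_all
  have hUDU : U * (Matrix.diagonal (Pi.single e (1:ℂ)) * Uᴴ) = Y := by
    have hst : (Pi.single e (1:ℂ)) ᵥ* Uᴴ = star y := by
      funext j
      rw [Matrix.single_vecMul]
      simp [hy, Matrix.conjTranspose_apply]
    rw [hD1, GroupInvAux.vvM, GroupInvAux.Mvv, ← hyU, hst, hY]
  have hVDV : V * (Matrix.diagonal (Pi.single e (1:ℂ)) * Vᴴ) = X := by
    have hst : (Pi.single e (1:ℂ)) ᵥ* Vᴴ = star x := by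
      funext j
      rw [Matrix.single_vecMul]
      simp [hx, Matrix.conjTranspose_apply]
    rw [hD1, GroupInvAux.vvM, GroupInvAux.Mvv, ← hxV, hst, hX]
  -- middle identities
  have hCM : C * (V * Ξ * Uᴴ) = 1 - Y := by
    calc C * (V * Ξ * Uᴴ) = U * (Sd * (Vᴴ * (V * (Ξ * Uᴴ)))) := by
          rw [hC]; simp only [Matrix.mul_assoc]
      _ = U * (Sd * (Ξ * Uᴴ)) := by rw [← Matrix.mul_assoc Vᴴ V, hVV, Matrix.one_mul]
      _ = U * ((Sd * Ξ) * Uᴴ) := by rw [Matrix.mul_assoc]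
      _ = U * Uᴴ - U * (Matrix.diagonal (Pi.single e 1) * Uᴴ) := by
          rw [hdd, Matrix.sub_mul, Matrix.one_mul, Matrix.mul_sub]
      _ = 1 - Y := by rw [hUUt, hUDU]
  have hMC : (V * Ξ * Uᴴ) * C = 1 - X := by
    calc (V * Ξ * Uᴴ) * C = V * (Ξ * (Uᴴ * (U * (Sd * Vᴴ)))) := by
          rw [hC]; simp only [Matrix.mul_assoc]
      _ = V * (Ξ * (Sd * Vᴴ)) := by rw [← Matrix.mul_assoc Uᴴ U, hUU, Matrix.one_mul]
      _ = V * ((Ξ * Sd) * Vᴴ) := by rw [Matrix.mul_assoc]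
      _ = V * Vᴴ - V * (Matrix.diagonal (Pi.single e 1) * Vᴴ) := by
          rw [hdd', Matrix.sub_mul, Matrix.one_mul, Matrix.mul_sub]
      _ = 1 - X := by rw [hVVt, hVDV]
  -- projection facts
  have hC1K : C * (1 - K) = C := by rw [Matrix.mul_sub, Matrix.mul_one, hCK, sub_zero]
  have h1KC : (1 - K) * C = C := by rw [Matrix.sub_mul, Matrix.one_mul, hKC, sub_zero]
  have h1K1K : (1 - K) * (1 - K) = 1 - K := by
    rw [Matrix.sub_mul, Matrix.one_mul, Matrix.mul_sub, Matrix.mul_one, hKK]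
    abel
  have hG' : G = (1 - K) * ((V * Ξ * Uᴴ) * (1 - K)) := by
    rw [hG, hK]; simp only [Matrix.mul_assoc]
  -- the four key products
  have hCG : C * G = 1 - K := by
    calc C * G = (C * (1 - K)) * ((V * Ξ * Uᴴ) * (1 - K)) := by
          rw [hG', ← Matrix.mul_assoc]
      _ = (C * (V * Ξ * Uᴴ)) * (1 - K) := by rw [hC1K, ← Matrix.mul_assoc]
      _ = (1 - Y) * (1 - K) := by rw [hCM]
      _ = 1 - K := by
          rw [Matrix.sub_mul, Matrix.one_mul, Matrix.mul_sub, Matrix.mul_one, hYK]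
          abel
  have hGC : G * C = 1 - K := by
    calc G * C = (1 - K) * ((V * Ξ * Uᴴ) * ((1 - K) * C)) := by
          rw [hG']; simp only [Matrix.mul_assoc]
      _ = (1 - K) * ((V * Ξ * Uᴴ) * C) := by rw [h1KC]
      _ = (1 - K) * (1 - X) := by rw [hMC]
      _ = 1 - K := by
          rw [Matrix.mul_sub, Matrix.mul_one, Matrix.sub_mul, Matrix.one_mul, hKX]
          abel
  refine ⟨by rw [hCG, hGC], ?_, ?_, ?_⟩
  · calc G * C * G = (1 - K) * ((1 - K) * ((V * Ξ * Uᴴ) * (1 - K))) := by rw [hGC, hG']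
      _ = ((1 - K) * (1 - K)) * ((V * Ξ * Uᴴ) * (1 - K)) := (Matrix.mul_assoc _ _ _).symm
      _ = G := by rw [h1K1K, hG']
  · rw [hCG, h1KC]
  · -- norm estimate
    haveI : Nonempty (Fin n) := ⟨e⟩
    set T : Set ℝ := {t : ℝ | ∃ i : Fin n, (i : ℕ) < n - 1 ∧ s i = t} with hT
    have hTsub : T ⊆ Set.range s := by rintro t ⟨i, -, rfl⟩; exact ⟨i, rfl⟩
    have hTfin : T.Finite := (Set.finite_range s).subset hTsub
    have hi0 : ((⟨0, by omega⟩ : Fin n) : ℕ) < n - 1 := by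
      simp only [Fin.val_mk]; omega
    have hTne : T.Nonempty := ⟨s ⟨0, by omega⟩, ⟨0, by omega⟩, hi0, rfl⟩
    have hmem : sInf T ∈ T := hTne.csInf_mem hTfin
    have hm0 : 0 < sInf T := by
      obtain ⟨i, hi, hieq⟩ := hmem
      rw [← hieq]; exact hspos i hi
    have hmle : ∀ i : Fin n, (i : ℕ) < n - 1 → sInf T ≤ s i := fun i hi =>
      csInf_le hTfin.bddBelow ⟨i, hi, rfl⟩
    have habs : 0 < ‖α‖ := norm_pos_iff.mpr hyx
    -- unit columns
    have hxx1 : (star x) ⬝ᵥ x = 1 := by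
      have h1 : (Vᴴ * V) e e = (star x) ⬝ᵥ x := by
        rw [hx]; simp [Matrix.mul_apply, dotProduct, Matrix.conjTranspose_apply]
      rw [← h1, hVV, Matrix.one_apply_eq]
    have hyy1 : (star y) ⬝ᵥ y = 1 := by
      have h1 : (Uᴴ * U) e e = (star y) ⬝ᵥ y := by
        rw [hy]; simp [Matrix.mul_apply, dotProduct, Matrix.conjTranspose_apply]
      rw [← h1, hUU, Matrix.one_apply_eq]
    set x' : EuclideanSpace ℂ (Fin n) := (WithLp.equiv 2 (Fin n → ℂ)).symm x with hx'
    set y' : EuclideanSpace ℂ (Fin n) := (WithLp.equiv 2 (Fin n → ℂ)).symm y with hy'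
    have hip : ∀ a b : Fin n → ℂ,
        (inner ℂ ((WithLp.equiv 2 (Fin n → ℂ)).symm a)
          ((WithLp.equiv 2 (Fin n → ℂ)).symm b) : ℂ) = (star a) ⬝ᵥ b := by
      intro a b
      rw [PiLp.inner_apply]
      simp [dotProduct, RCLike.inner_apply, WithLp.equiv_symm_apply]
      exact Finset.sum_congr rfl fun i _ => mul_comm _ _
    have hxn : ‖x'‖ = 1 := by
      have h2 : ‖x'‖ ^ 2 = 1 := by
        rw [norm_sq_eq_re_inner (𝕜 := ℂ) x', hx', hip x x, hxx1]
        simp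
      nlinarith [norm_nonneg x']
    have hyn : ‖y'‖ = 1 := by
      have h2 : ‖y'‖ ^ 2 = 1 := by
        rw [norm_sq_eq_re_inner (𝕜 := ℂ) y', hy', hip y y, hyy1]
        simp
      nlinarith [norm_nonneg y']
    have hinner_yx : (inner ℂ y' x' : ℂ) = α := by
      rw [hy', hx', hip, hα]
    -- norm of the projection factor
    have hPn : ‖(1 - K : Matrix (Fin n) (Fin n) ℂ)‖ ≤ (‖α‖)⁻¹ := by
      apply GroupInvAux.opNorm_le_of_mulVec _ (by positivity)
      intro v
      have hv : (1 - K) *ᵥ v = v - (α⁻¹ * ((star y) ⬝ᵥ v)) • x := by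
        rw [Matrix.sub_mulVec, Matrix.one_mulVec, hK, GroupInvAux.vv_mulVec, hw,
          smul_smul, mul_comm]
      have hinner : (inner ℂ y' ((WithLp.equiv 2 (Fin n → ℂ)).symm v) : ℂ)
          = (star y) ⬝ᵥ v := by rw [hy', hip]
      have heq : ((WithLp.equiv 2 (Fin n → ℂ)).symm (v - (α⁻¹ * ((star y) ⬝ᵥ v)) • x)
            : EuclideanSpace ℂ (Fin n))
          = (WithLp.equiv 2 (Fin n → ℂ)).symm v
            - (α⁻¹ * (inner ℂ y' ((WithLp.equiv 2 (Fin n → ℂ)).symm v) : ℂ)) • x' := by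
        rw [hinner, hx']
        rfl
      rw [hv, heq]
      exact GroupInvAux.proj_bound x' y' hxn hyn α hinner_yx hyx _
    -- norm of the diagonal factor
    have hΞn : ‖Ξ‖ ≤ (sInf T)⁻¹ := by
      rw [hΞ]
      apply GroupInvAux.diag_norm_le _ (by positivity)
      intro i
      by_cases hi : (i : ℕ) < n - 1
      · rw [if_pos hi, Complex.norm_real, Real.norm_eq_abs, abs_of_nonneg (inv_pos.mpr (hspos i hi)).le]
        exact inv_anti₀ hm0 (hmle i hi)
      · rw [if_neg hi]
        simp
        positivity
    -- unitary factors
    have hVn : ‖V‖ = 1 := CStarRing.norm_of_mem_unitary hV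
    have hUHn : ‖Uᴴ‖ = 1 := by
      rw [Matrix.l2_opNorm_conjTranspose]
      exact CStarRing.norm_of_mem_unitary hU
    have hstep1 : ‖V * Ξ * Uᴴ‖ ≤ (sInf T)⁻¹ := by
      calc ‖V * Ξ * Uᴴ‖ ≤ ‖V * Ξ‖ * ‖Uᴴ‖ := norm_mul_le _ _
        _ ≤ ‖V‖ * ‖Ξ‖ * ‖Uᴴ‖ := by
            exact mul_le_mul_of_nonneg_right (norm_mul_le _ _) (norm_nonneg _)
        _ = ‖Ξ‖ := by rw [hVn, hUHn]; ring
        _ ≤ (sInf T)⁻¹ := hΞn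
    have hG2 : ‖G‖ ≤ (‖α‖)⁻¹ * ((sInf T)⁻¹ * (‖α‖)⁻¹) := by
      rw [hG']
      calc ‖(1 - K) * ((V * Ξ * Uᴴ) * (1 - K))‖
          ≤ ‖(1 - K)‖ * ‖(V * Ξ * Uᴴ) * (1 - K)‖ := norm_mul_le _ _
        _ ≤ ‖(1 - K)‖ * (‖V * Ξ * Uᴴ‖ * ‖(1 - K)‖) :=
            mul_le_mul_of_nonneg_left (norm_mul_le _ _) (norm_nonneg _)
        _ ≤ (‖α‖)⁻¹ * ((sInf T)⁻¹ * (‖α‖)⁻¹) := by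
            refine mul_le_mul hPn ?_ (by positivity) (by positivity)
            exact mul_le_mul hstep1 hPn (norm_nonneg _) (by positivity)
    have hfin : specNorm G = ‖G‖ := rfl
    rw [hfin]
    calc ‖G‖ ≤ (‖α‖)⁻¹ * ((sInf T)⁻¹ * (‖α‖)⁻¹) := hG2
      _ = (1 / ‖α‖) ^ 2 / sInf T := by
          field_simp
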